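/- arXiv:2212.05859 — 6 statements merged into one kernel-verified Lean document; each statement's English description precedes it below -/
import Mathlib

section
/- Let p be a prime number. There exists a subgroup of (Z/pZ)^2 of order p that is invariant under the automorphism φ₄ defined by φ₄(a,b) = (-b,a) if and only if p = 2, or p is odd and 4 divides p - 1. -/
/-- Lemma `cyclicinvar`(1): for a prime `p`, there exists a subgroup of `(ℤ/pℤ)²` of order `p`
invariant under `φ₄(a,b) = (-b,a)` iff `p = 2`, or `p` is odd and `4 ∣ p - 1`. -/
theorem exists_phi4_invariant_subgroup_iff (p : ℕ) (hp : p.Prime) :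
    (∃ H : AddSubgroup (ZMod p × ZMod p), Nat.card H = p ∧
      ∀ x : ZMod p × ZMod p, x ∈ H ↔ ((-x.2, x.1) : ZMod p × ZMod p) ∈ H) ↔
    (p = 2 ∨ (Odd p ∧ 4 ∣ p - 1)) := by
  haveI : Fact p.Prime := ⟨hp⟩
  have h2 := hp.two_le
  have hodd : p = 2 ∨ p % 2 = 1 := by
    rcases hp.eq_two_or_odd' with h | h
    · exact Or.inl h
    · exact Or.inr (Nat.odd_iff.mp h)
  have harith : p % 4 ≠ 3 ↔ (p = 2 ∨ (p % 2 = 1 ∧ 4 ∣ p - 1)) := by omega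
  have key : (∃ H : AddSubgroup (ZMod p × ZMod p), Nat.card H = p ∧
      ∀ x : ZMod p × ZMod p, x ∈ H ↔ ((-x.2, x.1) : ZMod p × ZMod p) ∈ H) ↔
      IsSquare (-1 : ZMod p) := by
    constructor
    · rintro ⟨H, hcard, hinv⟩
      -- find a nonzero element of H
      have hne : (H : Set (ZMod p × ZMod p)) ≠ {0} ∨ True := Or.inr trivial
      have hHne : ∃ x : ZMod p × ZMod p, x ∈ H ∧ x ≠ 0 := by
        by_contra h
        push_neg at h
        have : H = ⊥ := by
          ext y; simp only [AddSubgroup.mem_bot]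
          exact ⟨fun hy => by by_contra hne; exact hne (h y hy), fun hy => hy ▸ H.zero_mem⟩
        rw [this] at hcard
        simp at hcard
        omega
      obtain ⟨x, hxH, hx0⟩ := hHne
      have horder : addOrderOf x = p := by
        have hdvd : addOrderOf x ∣ p := by
          apply addOrderOf_dvd_of_nsmul_eq_zero
          have : ∀ a : ZMod p, p • a = 0 := fun a => by
            simp [nsmul_eq_mul, ZMod.natCast_self]
          rw [Prod.smul_def, this, this]; rfl
        rcases (Nat.dvd_prime hp).mp hdvd with h | h
        · exact absurd (AddMonoid.addOrderOf_eq_one_iff.mp h) hx0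
        · exact h
      have hZle : AddSubgroup.zmultiples x ≤ H := by
        rintro y ⟨n, rfl⟩
        exact AddSubgroup.zsmul_mem H hxH n
      haveI : Finite H := Nat.finite_of_card_ne_zero (by omega)
      have hHZ : AddSubgroup.zmultiples x = H := by
        apply AddSubgroup.eq_of_le_of_card_ge hZle
        rw [hcard, Nat.card_zmultiples, horder]
      have hφ : ((-x.2, x.1) : ZMod p × ZMod p) ∈ AddSubgroup.zmultiples x := by
        rw [hHZ]; exact (hinv x).mp hxH
      obtain ⟨n, hn⟩ := hφ
      have hn1 : (n : ZMod p) * x.1 = -x.2 := by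
        have := congrArg Prod.fst hn
        simpa [zsmul_eq_mul] using this
      have hn2 : (n : ZMod p) * x.2 = x.1 := by
        have := congrArg Prod.snd hn
        simpa [zsmul_eq_mul] using this
      have hx2 : x.2 ≠ 0 := by
        intro h
        apply hx0
        have : x.1 = 0 := by rw [← hn2, h, mul_zero]
        exact Prod.ext this h
      refine ⟨(n : ZMod p), ?_⟩
      have : (n : ZMod p) * ((n : ZMod p) * x.2) = -x.2 := by rw [hn2, hn1]
      have h3 : ((n : ZMod p) * (n : ZMod p)) * x.2 = (-1) * x.2 := by
        rw [mul_assoc, this]; ring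
      have := mul_right_cancel₀ hx2 h3
      exact this.symm
    · rintro ⟨i, hi⟩
      refine ⟨{ carrier := {x | x.1 = i * x.2},
                zero_mem' := by simp,
                add_mem' := by rintro a b (ha : a.1 = _) (hb : b.1 = _)
                               show a.1 + b.1 = i * (a.2 + b.2); rw [ha, hb]; ring,
                neg_mem' := by rintro a (ha : a.1 = _)
                               show -a.1 = i * (-a.2); rw [ha]; ring }, ?_, ?_⟩
      · have e : {x : ZMod p × ZMod p // x.1 = i * x.2} ≃ ZMod p :=
          { toFun := fun x => x.1.2
            invFun := fun b => ⟨(i * b, b), rfl⟩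
            left_inv := by rintro ⟨⟨a, b⟩, h⟩; simp only; exact Subtype.ext (Prod.ext h.symm rfl)
            right_inv := fun b => rfl }
        exact (Nat.card_congr e).trans (Nat.card_zmod p)
      · intro x
        show x.1 = i * x.2 ↔ -x.2 = i * x.1
        constructor
        · intro h; linear_combination (-i) * h + x.2 * hi
        · intro h; linear_combination i * h + (-x.1) * hi
  rw [key, ZMod.exists_sq_eq_neg_one_iff, Nat.odd_iff]
  exact harith
end

section
/- Let p be a prime number. There exists a subgroup of (Z/pZ)^2 of order p that is invariant under the automorphism φ₃ defined by φ₃(a,b) = (-b, a-b) if and only if p = 3, or p > 3 and 3 divides p - 1. -/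
lemma phi3_root_iff (p : ℕ) (hp : p.Prime) :
    (∃ c : ZMod p, c ^ 2 + c + 1 = 0) ↔ (p = 3 ∨ (3 < p ∧ 3 ∣ p - 1)) := by
  haveI : Fact p.Prime := ⟨hp⟩
  constructor
  · rintro ⟨c, hc⟩
    have hc3 : c ^ 3 = 1 := by
      have : c ^ 3 - 1 = (c - 1) * (c ^ 2 + c + 1) := by ring
      have h2 : c ^ 3 - 1 = 0 := by rw [this, hc, mul_zero]
      linear_combination h2
    by_cases h1 : c = 1
    · left
      subst h1
      have h3 : ((3 : ℕ) : ZMod p) = 0 := by push_cast; linear_combination hc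
      have := (ZMod.natCast_eq_zero_iff 3 p).mp h3
      exact ((Nat.prime_dvd_prime_iff_eq hp (by norm_num)).mp this)
    · right
      have hc0 : c ≠ 0 := by
        intro h; rw [h] at hc; simp at hc
      set u : (ZMod p)ˣ := Units.mk0 c hc0 with hu
      have hu3 : u ^ 3 = 1 := by
        ext; push_cast [hu]; exact hc3
      have hord : orderOf u = 3 := by
        have hd : orderOf u ∣ 3 := orderOf_dvd_of_pow_eq_one hu3
        rcases (Nat.Prime.eq_one_or_self_of_dvd (by norm_num) _ hd) with h | h
        · exfalso
          have := orderOf_eq_one_iff.mp h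
          exact h1 (by simpa [hu, Units.ext_iff] using this)
        · exact h
      have hcard : Nat.card (ZMod p)ˣ = p - 1 := by
        rw [Nat.card_eq_fintype_card, ZMod.card_units_eq_totient, Nat.totient_prime hp]
      have hdvd : 3 ∣ p - 1 := by
        rw [← hcard, ← hord]; exact orderOf_dvd_natCard u
      refine ⟨?_, hdvd⟩
      have hp1 : 0 < p - 1 := by have := hp.two_le; omega
      have := Nat.le_of_dvd hp1 hdvd
      omega
  · rintro (rfl | ⟨hlt, hdvd⟩)
    · exact ⟨1, by have h := ZMod.natCast_self 3; push_cast at h; linear_combination h⟩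
    · haveI : IsCyclic (ZMod p)ˣ := inferInstance
      obtain ⟨g, hg⟩ := IsCyclic.exists_ofOrder_eq_natCard (α := (ZMod p)ˣ)
      have hcard : Nat.card (ZMod p)ˣ = p - 1 := by
        rw [Nat.card_eq_fintype_card, ZMod.card_units_eq_totient, Nat.totient_prime hp]
      rw [hcard] at hg
      have hne : orderOf g ≠ 0 := by rw [hg]; omega
      have hdvd' : 3 ∣ orderOf g := hg ▸ hdvd
      set u := g ^ (orderOf g / 3) with hu
      have hord : orderOf u = 3 := orderOf_pow_orderOf_div hne hdvd'
      set c : ZMod p := (u : ZMod p) with hcdef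
      have hc3 : c ^ 3 = 1 := by
        have : u ^ 3 = 1 := by rw [← hord]; exact pow_orderOf_eq_one u
        have := congrArg Units.val this; push_cast at this; exact this
      have hc1 : c ≠ 1 := by
        intro h
        have : u = 1 := Units.ext (by simpa [hcdef] using h)
        rw [this] at hord; simp at hord
      refine ⟨c, ?_⟩
      have hfac : (c - 1) * (c ^ 2 + c + 1) = 0 := by linear_combination hc3
      rcases mul_eq_zero.mp hfac with h | h
      · exact absurd (by linear_combination h) hc1
      · exact h

lemma card_span_singleton_zmod (p : ℕ) [Fact p.Prime] (x : ZMod p × ZMod p) (hx : x ≠ 0) :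
    Nat.card (Submodule.span (ZMod p) {x}) = p := by
  rw [Nat.card_congr (LinearEquiv.toSpanNonzeroSingleton (ZMod p) (ZMod p × ZMod p) x hx).toEquiv.symm]
  simp [Nat.card_zmod]

/-- Lemma `cyclicinvar`(2) for `d = 3`: for a prime `p`, there exists a subgroup of `(ℤ/pℤ)²`
of order `p` invariant under `φ₃(a,b) = (-b, a-b)` iff `p = 3`, or `p > 3` and `3 ∣ p - 1`. -/
theorem exists_phi3_invariant_subgroup_iff (p : ℕ) (hp : p.Prime) :
    (∃ H : AddSubgroup (ZMod p × ZMod p), Nat.card H = p ∧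
      ∀ x : ZMod p × ZMod p, x ∈ H ↔ ((-x.2, x.1 - x.2) : ZMod p × ZMod p) ∈ H) ↔
    (p = 3 ∨ (3 < p ∧ 3 ∣ p - 1)) := by
  haveI : Fact p.Prime := ⟨hp⟩
  rw [← phi3_root_iff p hp]
  constructor
  · rintro ⟨H, hcard, hinv⟩
    obtain ⟨x, hxH, hx0⟩ : ∃ x : ZMod p × ZMod p, x ∈ H ∧ x ≠ 0 := by
      by_contra h
      push_neg at h
      have hbot : H = ⊥ := by
        rw [AddSubgroup.eq_bot_iff_forall]
        exact h
      rw [hbot] at hcard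
      simp at hcard
      exact hp.ne_one hcard.symm
    have hsmul : ∀ (c : ZMod p) (y : ZMod p × ZMod p), y ∈ H → c • y ∈ H := by
      intro c y hy
      have : c • y = c.val • y := by
        rw [← Nat.cast_smul_eq_nsmul (ZMod p), ZMod.natCast_val, ZMod.cast_id]
      rw [this]
      exact AddSubgroup.nsmul_mem H hy c.val
    have hspan : (Submodule.span (ZMod p) {x} : Set (ZMod p × ZMod p)) ⊆ (H : Set (ZMod p × ZMod p)) := by
      intro y hy
      rw [SetLike.mem_coe, Submodule.mem_span_singleton] at hy
      obtain ⟨a, rfl⟩ := hy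
      exact hsmul a x hxH
    have hcards : Nat.card (Submodule.span (ZMod p) {x}) = p :=
      card_span_singleton_zmod p x hx0
    have hset : (Submodule.span (ZMod p) {x} : Set (ZMod p × ZMod p)) = (H : Set (ZMod p × ZMod p)) := by
      apply Set.eq_of_subset_of_ncard_le hspan _ (Set.toFinite _)
      rw [← Nat.card_coe_set_eq, ← Nat.card_coe_set_eq]
      simp only [SetLike.coe_sort_coe]
      rw [hcard, hcards]
    have hφx : ((-x.2, x.1 - x.2) : ZMod p × ZMod p) ∈ Submodule.span (ZMod p) {x} := by
      rw [← SetLike.mem_coe, hset]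
      exact (hinv x).mp hxH
    obtain ⟨c, hc⟩ := Submodule.mem_span_singleton.mp hφx
    have h1 : c * x.1 = -x.2 := by
      have := congrArg Prod.fst hc; simpa [smul_eq_mul] using this
    have h2 : c * x.2 = x.1 - x.2 := by
      have := congrArg Prod.snd hc; simpa [smul_eq_mul] using this
    have hx2 : x.2 ≠ 0 := by
      intro h
      apply hx0
      have hx1 : x.1 = 0 := by
        rw [h] at h2; simpa using h2.symm
      exact Prod.ext hx1 h
    have key : (c ^ 2 + c + 1) * x.2 = 0 := by linear_combination c * h2 + h1
    rcases mul_eq_zero.mp key with h | h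
    · exact ⟨c, h⟩
    · exact absurd h hx2
  · rintro ⟨c, hc⟩
    set x : ZMod p × ZMod p := (c + 1, 1) with hxdef
    have hx0 : x ≠ 0 := by
      intro h
      have := congrArg Prod.snd h
      simp [hxdef] at this
    refine ⟨(Submodule.span (ZMod p) {x}).toAddSubgroup, ?_, ?_⟩
    · simpa using card_span_singleton_zmod p x hx0
    · intro y
      simp only [Submodule.mem_toAddSubgroup]
      constructor
      · intro hy
        obtain ⟨a, ha⟩ := Submodule.mem_span_singleton.mp hy
        refine Submodule.mem_span_singleton.mpr ⟨a * c, ?_⟩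
        have ha1 : a * (c + 1) = y.1 := by
          have := congrArg Prod.fst ha; simpa [hxdef, smul_eq_mul] using this
        have ha2 : a = y.2 := by
          have := congrArg Prod.snd ha; simpa [hxdef, smul_eq_mul] using this
        have h1 : (a * c) * (c + 1) = -y.2 := by linear_combination a * hc - ha2
        have h2 : a * c = y.1 - y.2 := by linear_combination ha1 - ha2
        rw [Prod.ext_iff]
        simpa [hxdef, smul_eq_mul] using ⟨h1, h2⟩
      · intro hy
        obtain ⟨a, ha⟩ := Submodule.mem_span_singleton.mp hy
        refine Submodule.mem_span_singleton.mpr ⟨-(a * (c + 1)), ?_⟩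
        have ha1 : a * (c + 1) = -y.2 := by
          have := congrArg Prod.fst ha; simpa [hxdef, smul_eq_mul] using this
        have ha2 : a = y.1 - y.2 := by
          have := congrArg Prod.snd ha; simpa [hxdef, smul_eq_mul] using this
        have h1 : -(a * (c + 1) * (c + 1)) = y.1 := by
          linear_combination (-1 : ZMod p) * ha1 + ha2 - a * hc
        have h2 : -(a * (c + 1)) = y.2 := by linear_combination -ha1
        rw [Prod.ext_iff]
        simpa [hxdef, smul_eq_mul] using ⟨h1, h2⟩
end

section
/- Let p be a prime number. There exists a subgroup of (Z/pZ)^2 of order p that is invariant under the automorphism φ₆ defined by φ₆(a,b) = (-b, a+b) if and only if p = 3, or p > 3 and 3 divides p - 1. -/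
/-! An order-`p` subgroup of `(ℤ/p)²` is the `ℤ/p`-line through any of its nonzero vectors, so
it is `φ₆`-invariant iff it is spanned by an eigenvector of `φ₆`; being mapped into itself
suffices, as `φ₆³ = -1`. Since `φ₆² - φ₆ + 1 = 0`, an eigenvalue `c` is a root of `X² - X + 1`,
and conversely `(1, -c)` is an eigenvector for any root `c`. For `p = 3` the root is `c = -1`;
otherwise the roots are exactly the `-u` with `u` of order `3` in `(ℤ/p)ˣ`, which exist iff
`3 ∣ p - 1` by Lagrange and Cauchy. -/

open AddSubgroup

section Phi6

variable {M : Type*} [AddCommGroup M]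

def phi6 : M × M →+ M × M where
  toFun x := (-x.2, x.1 + x.2)
  map_zero' := by simp
  map_add' x y := Prod.ext (neg_add _ _) (add_add_add_comm _ _ _ _)

@[simp] lemma phi6_apply (x : M × M) : phi6 x = (-x.2, x.1 + x.2) := rfl

lemma phi6_phi6_sub_phi6_add_self (x : M × M) : phi6 (phi6 x) - phi6 x + x = 0 := by
  ext <;> simp

lemma phi6_phi6_phi6 (x : M × M) : phi6 (phi6 (phi6 x)) = -x := by
  ext <;> simp

lemma phi6_smul {R : Type*} [Monoid R] [DistribMulAction R M] (c : R) (x : M × M) :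
    phi6 (c • x) = c • phi6 x := by
  ext <;> simp [smul_add]

lemma AddSubgroup.mem_iff_phi6_mem {H : AddSubgroup (M × M)} (hH : ∀ x ∈ H, phi6 x ∈ H)
    (x : M × M) : x ∈ H ↔ phi6 x ∈ H :=
  ⟨hH x, fun h ↦ by simpa [phi6_phi6_phi6] using H.neg_mem (hH _ (hH _ h))⟩

lemma sq_sub_add_one_eq_zero_of_phi6_eq_smul {R : Type*} [Ring R] [IsCancelMulZero R]
    [Module R M] [Module.IsTorsionFree R M] {c : R} {v : M × M} (hv : v ≠ 0) (h : phi6 v = c • v) :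
    c ^ 2 - c + 1 = 0 := by
  have : (c ^ 2 - c + 1) • v = 0 := by
    rw [add_smul, sub_smul, sq, mul_smul, ← h, ← phi6_smul, ← h, one_smul]
    exact phi6_phi6_sub_phi6_add_self v
  exact (smul_eq_zero.mp this).resolve_right hv

lemma phi6_eq_smul_of_sq_sub_add_one_eq_zero {R : Type*} [CommRing R] {c : R}
    (hc : c ^ 2 - c + 1 = 0) : phi6 ((1, -c) : R × R) = c • (1, -c) := by
  ext
  · simp
  · simp only [phi6_apply, Prod.smul_snd, smul_eq_mul]
    linear_combination hc

end Phi6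

lemma exists_orderOf_eq_prime_iff_dvd_natCard {G : Type*} [Group G] [Finite G] (p : ℕ)
    [Fact p.Prime] : (∃ g : G, orderOf g = p) ↔ p ∣ Nat.card G :=
  ⟨fun ⟨g, hg⟩ ↦ hg ▸ orderOf_dvd_natCard g, exists_prime_orderOf_dvd_card' p⟩

lemma Units.orderOf_eq_three_iff {R : Type*} [CommRing R] [NoZeroDivisors R] (h3 : (3 : R) ≠ 0)
    (u : Rˣ) : orderOf u = 3 ↔ (u : R) ^ 2 + u + 1 = 0 := by
  have hfac : (u : R) ^ 3 - 1 = (u - 1) * ((u : R) ^ 2 + u + 1) := by ring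
  rw [orderOf_eq_prime_iff, ne_eq, Units.ext_iff, Units.ext_iff, Units.val_pow_eq_pow_val,
    Units.val_one, ← sub_eq_zero, hfac, mul_eq_zero, sub_eq_zero]
  refine ⟨fun ⟨h, hne⟩ ↦ h.resolve_left hne, fun h ↦ ⟨.inr h, fun h1 ↦ h3 ?_⟩⟩
  rw [h1] at h
  linear_combination h

lemma exists_sq_sub_add_one_eq_zero_iff {K : Type*} [Field K] [Finite K] :
    (∃ c : K, c ^ 2 - c + 1 = 0) ↔ (3 : K) = 0 ∨ 3 ∣ Nat.card K - 1 := by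
  by_cases h3 : (3 : K) = 0
  · exact ⟨fun _ ↦ .inl h3, fun _ ↦ ⟨-1, by linear_combination h3⟩⟩
  rw [or_iff_right h3, ← Nat.card_units, ← exists_orderOf_eq_prime_iff_dvd_natCard]
  constructor
  · rintro ⟨c, hc⟩
    have hc0 : -c ≠ 0 := neg_ne_zero.mpr (by rintro rfl; simp at hc)
    exact ⟨Units.mk0 (-c) hc0, (Units.orderOf_eq_three_iff h3 _).mpr
      (by simp only [Units.val_mk0]; linear_combination hc)⟩
  · rintro ⟨u, hu⟩
    exact ⟨-u, by linear_combination (Units.orderOf_eq_three_iff h3 u).mp hu⟩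

lemma ZMod.exists_sq_sub_add_one_eq_zero_iff (p : ℕ) [Fact p.Prime] :
    (∃ c : ZMod p, c ^ 2 - c + 1 = 0) ↔ p = 3 ∨ 3 ∣ p - 1 := by
  have h3 : (3 : ZMod p) = 0 ↔ p = 3 := by
    rw [← Nat.cast_ofNat, ZMod.natCast_eq_zero_iff,
      Nat.prime_dvd_prime_iff_eq Fact.out Nat.prime_three]
  rw [_root_.exists_sq_sub_add_one_eq_zero_iff, h3, Nat.card_zmod]

section ZModModule

variable {p : ℕ} [Fact p.Prime] {V : Type*} [AddCommGroup V] [Module (ZMod p) V]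

lemma AddSubgroup.exists_smul_eq_of_card_eq_prime {H : AddSubgroup V} (hcard : Nat.card H = p)
    {f : V →+ V} (hf : ∀ x ∈ H, f x ∈ H) : ∃ v ≠ 0, ∃ c : ZMod p, f v = c • v := by
  have : Finite H := Nat.finite_of_card_ne_zero (hcard ▸ (Fact.out : p.Prime).ne_zero)
  have : Nontrivial H := by
    rw [← Finite.one_lt_card_iff_nontrivial, hcard]
    exact (Fact.out : p.Prime).one_lt
  obtain ⟨⟨v, hv⟩, hv0⟩ := exists_ne (0 : H)
  obtain ⟨n, hn⟩ := mem_zmultiples_iff.mp <|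
    mem_zmultiples_of_prime_card hcard (g' := ⟨f v, hf v hv⟩) hv0
  refine ⟨v, fun h ↦ hv0 (by simp [h]), n, ?_⟩
  rw [Int.cast_smul_eq_zsmul]
  exact congrArg Subtype.val hn.symm

lemma ZModModule.card_zmultiples_of_ne_zero {v : V} (hv : v ≠ 0) : Nat.card (zmultiples v) = p := by
  rw [Nat.card_zmultiples, addOrderOf_eq_prime (ZModModule.char_nsmul_eq_zero p v) hv]

lemma AddSubgroup.zmultiples_le_comap_of_eq_smul {f : V →+ V} {v : V} {c : ZMod p}
    (h : f v = c • v) : zmultiples v ≤ (zmultiples v).comap f := by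
  rw [zmultiples_le, mem_comap, h]
  exact zmod_smul_mem (mem_zmultiples v) c

end ZModModule

/-- Lemma `cyclicinvar`(2) for `d = 6`: for a prime `p`, there exists a subgroup of `(ℤ/pℤ)²`
of order `p` invariant under `φ₆(a,b) = (-b, a+b)` iff `p = 3`, or `p > 3` and `3 ∣ p - 1`. -/
theorem exists_phi6_invariant_subgroup_iff (p : ℕ) (hp : p.Prime) :
    (∃ H : AddSubgroup (ZMod p × ZMod p), Nat.card H = p ∧
      ∀ x : ZMod p × ZMod p, x ∈ H ↔ ((-x.2, x.1 + x.2) : ZMod p × ZMod p) ∈ H) ↔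
    (p = 3 ∨ (3 < p ∧ 3 ∣ p - 1)) := by
  have : Fact p.Prime := ⟨hp⟩
  have hp2 := hp.two_le
  rw [show p = 3 ∨ (3 < p ∧ 3 ∣ p - 1) ↔ p = 3 ∨ 3 ∣ p - 1 by omega,
    ← ZMod.exists_sq_sub_add_one_eq_zero_iff]
  constructor
  · rintro ⟨H, hcard, hH⟩
    obtain ⟨v, hv, c, hc⟩ := H.exists_smul_eq_of_card_eq_prime hcard (f := phi6) fun x ↦ (hH x).mp
    exact ⟨c, sq_sub_add_one_eq_zero_of_phi6_eq_smul hv hc⟩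
  · rintro ⟨c, hc⟩
    have hv : ((1, -c) : ZMod p × ZMod p) ≠ 0 := fun h ↦ one_ne_zero (congrArg Prod.fst h)
    exact ⟨zmultiples (1, -c), ZModModule.card_zmultiples_of_ne_zero hv, mem_iff_phi6_mem fun _ hx ↦
      zmultiples_le_comap_of_eq_smul (phi6_eq_smul_of_sq_sub_add_one_eq_zero hc) hx⟩
end

section
/- No group among Z/3Z × Z/3Z, (Z/3Z)² ⋊_{φ₃} Z/3Z, Z/2Z × Z/4Z, and (Z/2Z)² ⋊_{φ₄} Z/4Z has a triple of elements (g₁,g₂,g₃) generating the group with g₁g₂g₃ = 1 such that the orders (n₁,n₂,n₃) satisfy 1 - 1/n₁ - 1/n₂ - 1/n₃ > 0 and at least one g_i lies in the distinguished abelian normal subgroup A, with n₁ = n₂ = d. -/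
/-- None of the four exceptional groups `ℤ/3 × ℤ/3`, `(ℤ/3)² ⋊_{φ₃} ℤ/3`, `ℤ/2 × ℤ/4`,
`(ℤ/2)² ⋊_{φ₄} ℤ/4` admits a generating triple `(g₁,g₂,g₃)` with `g₁g₂g₃ = 1` of type
`[d,d,ℓ]` (with `d = 3` resp. `d = 4`, and at least one `gᵢ` in the distinguished abelian
normal subgroup `A` for the semidirect products) satisfying the Hurwitz inequality
`1 - 2/d - 1/ℓ > 0`. -/
theorem exceptional_groups_no_hurwitz_triple
    (φ3 : Multiplicative (ZMod 3) →* MulAut (Multiplicative (ZMod 3 × ZMod 3)))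
    (hφ3 : ∀ x : ZMod 3 × ZMod 3,
      φ3 (Multiplicative.ofAdd 1) (Multiplicative.ofAdd x) =
        Multiplicative.ofAdd (-x.2, x.1 - x.2))
    (φ4 : Multiplicative (ZMod 4) →* MulAut (Multiplicative (ZMod 2 × ZMod 2)))
    (hφ4 : ∀ x : ZMod 2 × ZMod 2,
      φ4 (Multiplicative.ofAdd 1) (Multiplicative.ofAdd x) =
        Multiplicative.ofAdd (-x.2, x.1)) :
    (¬ ∃ a b c : ZMod 3 × ZMod 3,
      AddSubgroup.closure ({a, b, c} : Set (ZMod 3 × ZMod 3)) = ⊤ ∧ a + b + c = 0 ∧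
      addOrderOf a = 3 ∧ addOrderOf b = 3 ∧
      (1 : ℚ) - 2 / 3 - 1 / (addOrderOf c) > 0) ∧
    (¬ ∃ g₁ g₂ g₃ : Multiplicative (ZMod 3 × ZMod 3) ⋊[φ3] Multiplicative (ZMod 3),
      Subgroup.closure ({g₁, g₂, g₃} : Set _) = ⊤ ∧ g₁ * g₂ * g₃ = 1 ∧
      orderOf g₁ = 3 ∧ orderOf g₂ = 3 ∧
      (g₁ ∈ (SemidirectProduct.inl (φ := φ3)).range ∨
       g₂ ∈ (SemidirectProduct.inl (φ := φ3)).range ∨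
       g₃ ∈ (SemidirectProduct.inl (φ := φ3)).range) ∧
      (1 : ℚ) - 2 / 3 - 1 / (orderOf g₃) > 0) ∧
    (¬ ∃ a b c : ZMod 2 × ZMod 4,
      AddSubgroup.closure ({a, b, c} : Set (ZMod 2 × ZMod 4)) = ⊤ ∧ a + b + c = 0 ∧
      addOrderOf a = 4 ∧ addOrderOf b = 4 ∧
      (1 : ℚ) - 2 / 4 - 1 / (addOrderOf c) > 0) ∧
    (¬ ∃ g₁ g₂ g₃ : Multiplicative (ZMod 2 × ZMod 2) ⋊[φ4] Multiplicative (ZMod 4),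
      Subgroup.closure ({g₁, g₂, g₃} : Set _) = ⊤ ∧ g₁ * g₂ * g₃ = 1 ∧
      orderOf g₁ = 4 ∧ orderOf g₂ = 4 ∧
      (g₁ ∈ (SemidirectProduct.inl (φ := φ4)).range ∨
       g₂ ∈ (SemidirectProduct.inl (φ := φ4)).range ∨
       g₃ ∈ (SemidirectProduct.inl (φ := φ4)).range) ∧
      (1 : ℚ) - 2 / 4 - 1 / (orderOf g₃) > 0) := by
  have hdvd3 : ∀ ℓ : ℕ, ℓ ∣ 3 → ¬ ((1 : ℚ) - 2 / 3 - 1 / (ℓ : ℚ) > 0) := by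
    intro ℓ hℓ
    rcases (Nat.prime_three.eq_one_or_self_of_dvd ℓ hℓ) with h | h <;> subst h <;> norm_num
  have hdvd2 : ∀ ℓ : ℕ, ℓ ∣ 2 → ¬ ((1 : ℚ) - 2 / 4 - 1 / (ℓ : ℚ) > 0) := by
    intro ℓ hℓ
    rcases (Nat.prime_two.eq_one_or_self_of_dvd ℓ hℓ) with h | h <;> subst h <;> norm_num
  refine ⟨?_, ?_, ?_, ?_⟩
  · -- ℤ/3 × ℤ/3
    rintro ⟨a, b, c, -, -, -, -, hineq⟩
    have h3 : ∀ v : ZMod 3 × ZMod 3, (3 : ℕ) • v = 0 := by decide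
    exact hdvd3 _ (addOrderOf_dvd_of_nsmul_eq_zero (h3 c)) hineq
  · -- (ℤ/3)² ⋊ ℤ/3  : the group has exponent 3
    rintro ⟨g1, g2, g3, -, -, -, -, -, hineq⟩
    have h2 : ∀ x : ZMod 3 × ZMod 3,
        φ3 (Multiplicative.ofAdd 2) (Multiplicative.ofAdd x) =
          Multiplicative.ofAdd (x.2 - x.1, -x.1) := by
      intro x
      have e : (Multiplicative.ofAdd (2 : ZMod 3)) =
          Multiplicative.ofAdd 1 * Multiplicative.ofAdd 1 := by decide
      rw [e, map_mul, MulAut.mul_apply, hφ3, hφ3]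
      exact congrArg Multiplicative.ofAdd (by simp only [Prod.mk.injEq]; constructor <;> ring)
    have cube : g3 ^ 3 = 1 := by
      have hs : ∀ u : ZMod 3, u = 0 ∨ u = 1 ∨ u = 2 := by decide
      have hy3 : ∀ v : ZMod 3 × ZMod 3, v + v + v = 0 := by decide
      rcases g3 with ⟨x, t⟩
      obtain ⟨y, rfl⟩ := Multiplicative.ofAdd.surjective x
      obtain ⟨s, rfl⟩ := Multiplicative.ofAdd.surjective t
      have pow3 : (⟨Multiplicative.ofAdd y, Multiplicative.ofAdd s⟩ :
          Multiplicative (ZMod 3 × ZMod 3) ⋊[φ3] Multiplicative (ZMod 3)) ^ 3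
          = ⟨Multiplicative.ofAdd y * φ3 (Multiplicative.ofAdd s) (Multiplicative.ofAdd y) *
              φ3 (Multiplicative.ofAdd s * Multiplicative.ofAdd s) (Multiplicative.ofAdd y),
             Multiplicative.ofAdd s * Multiplicative.ofAdd s * Multiplicative.ofAdd s⟩ := by
        rw [pow_succ, pow_succ, pow_one]; rfl
      rw [pow3]
      rcases hs s with rfl | rfl | rfl
      · rw [show Multiplicative.ofAdd (0 : ZMod 3) = 1 from rfl]
        simp only [one_mul, map_one, MulAut.one_apply]
        exact SemidirectProduct.ext (congrArg Multiplicative.ofAdd (hy3 y)) rfl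
      · rw [show Multiplicative.ofAdd (1 : ZMod 3) * Multiplicative.ofAdd (1 : ZMod 3)
            = Multiplicative.ofAdd (2 : ZMod 3) from by decide, hφ3, h2]
        refine SemidirectProduct.ext (congrArg Multiplicative.ofAdd ?_)
          (congrArg Multiplicative.ofAdd (show (1 : ZMod 3) + 1 + 1 = 0 by decide))
        show y + (-y.2, y.1 - y.2) + (y.2 - y.1, -y.1) = 0
        rcases y with ⟨y1, y2⟩
        simp only [Prod.mk_add_mk, Prod.mk.injEq, Prod.ext_iff, Prod.fst_zero, Prod.snd_zero]
        constructor <;> ring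
      · rw [show Multiplicative.ofAdd (2 : ZMod 3) * Multiplicative.ofAdd (2 : ZMod 3)
            = Multiplicative.ofAdd (1 : ZMod 3) from by decide, h2, hφ3]
        refine SemidirectProduct.ext (congrArg Multiplicative.ofAdd ?_)
          (congrArg Multiplicative.ofAdd (show (2 : ZMod 3) + 2 + 2 = 0 by decide))
        show y + (y.2 - y.1, -y.1) + (-y.2, y.1 - y.2) = 0
        rcases y with ⟨y1, y2⟩
        simp only [Prod.mk_add_mk, Prod.mk.injEq, Prod.ext_iff, Prod.fst_zero, Prod.snd_zero]
        constructor <;> ring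
    exact hdvd3 _ (orderOf_dvd_of_pow_eq_one cube) hineq
  · -- ℤ/2 × ℤ/4
    rintro ⟨a, b, c, -, hsum, ha, hb, hineq⟩
    have key : ∀ a b c : ZMod 2 × ZMod 4, a + b + c = 0 →
        ¬((2 : ℕ) • a = 0) → ¬((2 : ℕ) • b = 0) → (2 : ℕ) • c = 0 := by decide
    have h2a : ¬((2 : ℕ) • a = 0) := by
      intro h
      have := addOrderOf_dvd_of_nsmul_eq_zero h
      rw [ha] at this
      norm_num at this
    have h2b : ¬((2 : ℕ) • b = 0) := by
      intro h
      have := addOrderOf_dvd_of_nsmul_eq_zero h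
      rw [hb] at this
      norm_num at this
    exact hdvd2 _ (addOrderOf_dvd_of_nsmul_eq_zero (key a b c hsum h2a h2b)) hineq
  · -- (ℤ/2)² ⋊ ℤ/4
    rintro ⟨g1, g2, g3, -, hmul1, h1, h2, -, hineq⟩
    have h2' : ∀ x : ZMod 2 × ZMod 2,
        φ4 (Multiplicative.ofAdd 2) (Multiplicative.ofAdd x) = Multiplicative.ofAdd x := by
      intro x
      have e : (Multiplicative.ofAdd (2 : ZMod 4)) =
          Multiplicative.ofAdd 1 * Multiplicative.ofAdd 1 := by decide
      rw [e, map_mul, MulAut.mul_apply, hφ4, hφ4]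
      exact congrArg Multiplicative.ofAdd (by
        rcases x with ⟨x1, x2⟩; revert x1 x2; decide)
    -- an element whose right component is even squares to 1
    have sq : ∀ g : Multiplicative (ZMod 2 × ZMod 2) ⋊[φ4] Multiplicative (ZMod 4),
        (Multiplicative.toAdd g.right = 0 ∨ Multiplicative.toAdd g.right = 2) → g ^ 2 = 1 := by
      have hyy : ∀ v : ZMod 2 × ZMod 2, v + v = 0 := by decide
      rintro ⟨x, t⟩ ht
      obtain ⟨y, rfl⟩ := Multiplicative.ofAdd.surjective x
      obtain ⟨s, rfl⟩ := Multiplicative.ofAdd.surjective t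
      have pow2 : (⟨Multiplicative.ofAdd y, Multiplicative.ofAdd s⟩ :
          Multiplicative (ZMod 2 × ZMod 2) ⋊[φ4] Multiplicative (ZMod 4)) ^ 2
          = ⟨Multiplicative.ofAdd y * φ4 (Multiplicative.ofAdd s) (Multiplicative.ofAdd y),
             Multiplicative.ofAdd s * Multiplicative.ofAdd s⟩ := by
        rw [pow_two]; rfl
      rw [pow2]
      replace ht : s = 0 ∨ s = 2 := ht
      rcases ht with rfl | rfl
      · rw [show Multiplicative.ofAdd (0 : ZMod 4) = 1 from rfl]
        simp only [map_one, MulAut.one_apply, one_mul]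
        exact SemidirectProduct.ext (congrArg Multiplicative.ofAdd (hyy y)) rfl
      · rw [h2']
        exact SemidirectProduct.ext (congrArg Multiplicative.ofAdd (hyy y))
          (congrArg Multiplicative.ofAdd (show (2 : ZMod 4) + 2 = 0 by decide))
    -- elements of order > 2 have odd right component
    have odd : ∀ g : Multiplicative (ZMod 2 × ZMod 2) ⋊[φ4] Multiplicative (ZMod 4),
        ¬(g ^ 2 = 1) →
        (Multiplicative.toAdd g.right = 1 ∨ Multiplicative.toAdd g.right = 3) := by
      intro g hg
      have h1 : ¬(Multiplicative.toAdd g.right = 0 ∨ Multiplicative.toAdd g.right = 2) :=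
        fun h => hg (sq g h)
      have : ∀ u : ZMod 4, ¬(u = 0 ∨ u = 2) → (u = 1 ∨ u = 3) := by decide
      exact this _ h1
    have hg1 : ¬(g1 ^ 2 = 1) := by
      intro h
      have := orderOf_dvd_of_pow_eq_one h
      rw [h1] at this
      norm_num at this
    have hg2 : ¬(g2 ^ 2 = 1) := by
      intro h
      have := orderOf_dvd_of_pow_eq_one h
      rw [h2] at this
      norm_num at this
    have hg3 : ¬(g3 ^ 2 = 1) := fun h =>
      hdvd2 _ (orderOf_dvd_of_pow_eq_one h) hineq
    have hr : Multiplicative.toAdd g1.right + Multiplicative.toAdd g2.right +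
        Multiplicative.toAdd g3.right = 0 := by
      have := congrArg (fun g : Multiplicative (ZMod 2 × ZMod 2) ⋊[φ4] Multiplicative (ZMod 4)
        => Multiplicative.toAdd g.right) hmul1
      simpa using this
    have final : ∀ u v w : ZMod 4, (u = 1 ∨ u = 3) → (v = 1 ∨ v = 3) → (w = 1 ∨ w = 3) →
        u + v + w ≠ 0 := by decide
    exact final _ _ _ (odd g1 hg1) (odd g2 hg2) (odd g3 hg3) hr
end

section
/- Let G = A ⋊_{φ₃} Z/3Z with A ≤ (Z/nZ)² a φ₃-invariant subgroup and |A| ≤ 6, where φ₃(1)(a,b) = (-b, a-b). Then G has no generating triple (g₁,g₂,g₃) with g₁g₂g₃ = 1 of type [3,3,ℓ] with ℓ ≥ 4 where g₃ ∈ A. Equivalently: if A ≤ (Z/nZ)² is φ₃-invariant and contains an element of order ℓ ≥ 4, then |A| ≥ 7. -/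
/-- If `A ≤ (ℤ/nℤ)²` is a `φ₃`-invariant subgroup (where `φ₃(a,b) = (-b, a-b)`)
containing an element of order `ℓ ≥ 4`, then `|A| ≥ 7`. (Hence no group
`A ⋊_{φ₃} ℤ/3` with `|A| ≤ 6` has a generating triple of type `[3,3,ℓ]`, `ℓ ≥ 4`,
with third element in `A`.) -/
theorem phi3_invariant_subgroup_card_ge_seven (n : ℕ)
    (A : AddSubgroup (ZMod n × ZMod n))
    (hinv : ∀ x ∈ A, ((-x.2, x.1 - x.2) : ZMod n × ZMod n) ∈ A)
    (hx : ∃ x ∈ A, 4 ≤ addOrderOf x) :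
    7 ≤ Nat.card A := by
  obtain ⟨x, hxA, hord⟩ := hx
  -- rule out n = 0 : ℤ × ℤ is torsion-free
  rcases Nat.eq_zero_or_pos n with rfl | hn
  · exfalso
    have h0 : addOrderOf x • x = 0 := addOrderOf_nsmul_eq_zero x
    have h1 : ((addOrderOf x : ℤ)) * (show ℤ from x.1) = 0 := by
      have h := congrArg Prod.fst h0
      simp only [Prod.smul_fst, Prod.fst_zero] at h
      rw [nsmul_eq_mul] at h
      exact h
    have h2 : ((addOrderOf x : ℤ)) * (show ℤ from x.2) = 0 := by
      have h := congrArg Prod.snd h0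
      simp only [Prod.smul_snd, Prod.snd_zero] at h
      rw [nsmul_eq_mul] at h
      exact h
    have hne : (addOrderOf x : ℤ) ≠ 0 := by exact_mod_cast (by omega : addOrderOf x ≠ 0)
    have hfst : (show ℤ from x.1) = 0 := by
      rcases mul_eq_zero.mp h1 with h | h
      · exact absurd h hne
      · exact h
    have hsnd : (show ℤ from x.2) = 0 := by
      rcases mul_eq_zero.mp h2 with h | h
      · exact absurd h hne
      · exact h
    have hx0 : x = 0 := Prod.ext hfst hsnd
    rw [hx0, addOrderOf_zero] at hord
    omega
  haveI : NeZero n := ⟨hn.ne'⟩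
  by_contra hcard
  push_neg at hcard
  set m := addOrderOf x with hm
  -- zmultiples x ≤ A
  have hle : AddSubgroup.zmultiples x ≤ A := by
    rw [AddSubgroup.zmultiples_le]; exact hxA
  have hcz : Nat.card (AddSubgroup.zmultiples x) = m := Nat.card_zmultiples x
  have hmle : m ≤ Nat.card A := by
    rw [← hcz]
    exact AddSubgroup.card_le_of_le hle
  -- m divides Nat.card A
  have hdvd : m ∣ Nat.card A := A.addOrderOf_dvd_natCard hxA
  have hpos : 0 < Nat.card A := Nat.card_pos
  have hmeq : Nat.card A = m := by
    obtain ⟨t, ht⟩ := hdvd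
    rcases t with _ | _ | t
    · omega
    · omega
    · exfalso; nlinarith
  -- A = zmultiples x as sets
  have heq : (AddSubgroup.zmultiples x : Set (ZMod n × ZMod n)) = (A : Set (ZMod n × ZMod n)) :=
    Set.eq_of_subset_of_ncard_le hle
      (by rw [← Nat.card_coe_set_eq, ← Nat.card_coe_set_eq]
          simp only [SetLike.coe_sort_coe]
          rw [hcz, hmeq]) (Set.toFinite _)
  -- the image of x under φ₃ lies in zmultiples x
  have hTx : ((-x.2, x.1 - x.2) : ZMod n × ZMod n) ∈ AddSubgroup.zmultiples x := by
    rw [SetLike.mem_coe.symm, heq]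
    exact hinv x hxA
  obtain ⟨k, hk⟩ := AddSubgroup.mem_zmultiples_iff.mp hTx
  -- extract component equations
  have hk1 : (k : ZMod n) * x.1 = -x.2 := by
    have := congrArg Prod.fst hk
    simpa [zsmul_eq_mul] using this
  have hk2 : (k : ZMod n) * x.2 = x.1 - x.2 := by
    have := congrArg Prod.snd hk
    simpa [zsmul_eq_mul] using this
  -- (1 + k + k²) • x = 0
  have hzero : (1 + k + k * k) • x = 0 := by
    have e1 : ((1 + k + k * k : ℤ) : ZMod n) * x.1 = 0 := by
      push_cast
      linear_combination (1 + (k : ZMod n)) * hk1 - hk2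
    have e2 : ((1 + k + k * k : ℤ) : ZMod n) * x.2 = 0 := by
      push_cast
      linear_combination hk1 + (k : ZMod n) * hk2
    have hc : ((1 + k + k * k) • x).1 = 0 ∧ ((1 + k + k * k) • x).2 = 0 := by
      constructor <;> simp only [Prod.smul_fst, Prod.smul_snd, zsmul_eq_mul]
      · exact_mod_cast e1
      · exact_mod_cast e2
    exact Prod.ext hc.1 hc.2
  have hdvd2 : (m : ℤ) ∣ (1 + k + k * k) := by
    rw [hm]
    exact addOrderOf_dvd_iff_zsmul_eq_zero.mpr hzero
  -- now m ∈ {4, 5, 6} and no k satisfies 1 + k + k² ≡ 0 mod m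
  have hm6 : m ≤ 6 := by omega
  interval_cases m
  · have hc : ((1 + k + k * k : ℤ) : ZMod 4) = 0 :=
      (ZMod.intCast_zmod_eq_zero_iff_dvd _ 4).mpr (by exact_mod_cast hdvd2)
    push_cast at hc
    revert hc
    generalize ((k : ZMod 4)) = r
    revert r; decide
  · have hc : ((1 + k + k * k : ℤ) : ZMod 5) = 0 :=
      (ZMod.intCast_zmod_eq_zero_iff_dvd _ 5).mpr (by exact_mod_cast hdvd2)
    push_cast at hc
    revert hc
    generalize ((k : ZMod 5)) = r
    revert r; decide
  · have hc : ((1 + k + k * k : ℤ) : ZMod 6) = 0 :=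
      (ZMod.intCast_zmod_eq_zero_iff_dvd _ 6).mpr (by exact_mod_cast hdvd2)
    push_cast at hc
    revert hc
    generalize ((k : ZMod 6)) = r
    revert r; decide
end

section
/- Let σ = Cone(e₁,…,eₙ) ⊂ ℝⁿ and N = ℤⁿ + ℤ·(1/ℓ)(1,…,1,ℓ-1) for integers n ≥ 3, ℓ ≥ 2. The dual lattice N^∨ consists exactly of those x ∈ ℤⁿ such that ℓ divides x₁ + … + x_{n-1} + (ℓ-1)xₙ. Moreover, if x ∈ ℤⁿ satisfies x₁ ≥ -1, x_j ≥ 0 for j ≠ 1, and ℓ ∣ (x₁ + … + x_{n-1} + (ℓ-1)xₙ), then for every k ∈ {1,…,ℓ-1}: kx₁ + … + kx_{n-1} + (ℓ-k)xₙ ≥ 0. -/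
open Finset

/-- Toric setup for the resolution of the cyclic quotient singularity of type
`(1/ℓ)(1,…,1,ℓ-1)`: with `N = ℤⁿ + ℤ·v`, `v = (1/ℓ)(1,…,1,ℓ-1)`, an integer vector `x`
belongs to the dual lattice `N^∨` iff `ℓ ∣ x₁ + … + x_{n-1} + (ℓ-1)xₙ`; and any such `x`
with `x₁ ≥ -1` and `x_j ≥ 0` for `j ≠ 1` satisfies `⟨x, v_k⟩ ≥ 0`, i.e.
`kx₁ + … + kx_{n-1} + (ℓ-k)xₙ ≥ 0`, for every `k ∈ {1,…,ℓ-1}`. -/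
theorem dual_lattice_polyhedron_comparison (n ℓ : ℕ) (hn : 3 ≤ n) (hℓ : 2 ≤ ℓ) :
    (∀ x : Fin n → ℤ,
      ((∃ m : ℤ, (∑ i : Fin n, (x i : ℚ) *
          (if (i : ℕ) = n - 1 then ((ℓ : ℚ) - 1) / ℓ else 1 / ℓ)) = m) ↔
        (ℓ : ℤ) ∣ ∑ i : Fin n, x i * (if (i : ℕ) = n - 1 then (ℓ : ℤ) - 1 else 1))) ∧
    (∀ x : Fin n → ℤ,
      -1 ≤ x ⟨0, by omega⟩ →
      (∀ j : Fin n, j ≠ ⟨0, by omega⟩ → 0 ≤ x j) →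
      (ℓ : ℤ) ∣ (∑ i : Fin n, x i * (if (i : ℕ) = n - 1 then (ℓ : ℤ) - 1 else 1)) →
      ∀ k : ℕ, 1 ≤ k → k ≤ ℓ - 1 →
        0 ≤ ∑ i : Fin n, x i * (if (i : ℕ) = n - 1 then (ℓ : ℤ) - k else (k : ℤ))) := by
  have hℓ0 : (ℓ : ℚ) ≠ 0 := by positivity
  set last : Fin n := ⟨n - 1, by omega⟩ with hlast
  have hlastval : (last : ℕ) = n - 1 := rfl
  -- splitting lemma for integer sums
  have hsplit : ∀ (x : Fin n → ℤ) (a b : ℤ),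
      ∑ i : Fin n, x i * (if (i : ℕ) = n - 1 then a else b)
        = (∑ i ∈ Finset.univ.erase last, x i) * b + x last * a := by
    intro x a b
    rw [← Finset.sum_erase_add _ _ (Finset.mem_univ last)]
    congr 1
    · rw [Finset.sum_mul]
      refine Finset.sum_congr rfl fun i hi => ?_
      have hne : (i : ℕ) ≠ n - 1 := fun h =>
        (Finset.mem_erase.mp hi).1 (Fin.ext h)
      simp [hne]
    · simp [hlastval]
  constructor
  · intro x
    have key : (∑ i : Fin n, (x i : ℚ) *
        (if (i : ℕ) = n - 1 then ((ℓ : ℚ) - 1) / ℓ else 1 / ℓ))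
        = ((∑ i : Fin n, x i * (if (i : ℕ) = n - 1 then (ℓ : ℤ) - 1 else 1) : ℤ) : ℚ) / ℓ := by
      push_cast
      rw [Finset.sum_div]
      refine Finset.sum_congr rfl fun i _ => ?_
      by_cases h : (i : ℕ) = n - 1 <;> simp [h] <;> ring
    rw [key]
    constructor
    · rintro ⟨m, hm⟩
      rw [div_eq_iff hℓ0] at hm
      have : (∑ i : Fin n, x i * (if (i : ℕ) = n - 1 then (ℓ : ℤ) - 1 else 1)) = m * ℓ := by
        exact_mod_cast hm
      exact ⟨m, by linarith⟩
    · rintro ⟨c, hc⟩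
      refine ⟨c, ?_⟩
      rw [hc]
      push_cast
      field_simp
  · intro x h0 hj hdvd k hk1 hk2
    rw [hsplit] at hdvd ⊢
    set A : ℤ := ∑ i ∈ Finset.univ.erase last, x i with hA
    set B : ℤ := x last with hB
    have hzero_ne : (⟨0, by omega⟩ : Fin n) ≠ last := by
      intro h
      have := congrArg Fin.val h
      simp [hlastval] at this
      omega
    have hBnn : 0 ≤ B := hj last (Ne.symm hzero_ne)
    have hAge : -1 ≤ A := by
      have hmem : (⟨0, by omega⟩ : Fin n) ∈ Finset.univ.erase last :=
        Finset.mem_erase.mpr ⟨hzero_ne, Finset.mem_univ _⟩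
      rw [hA, ← Finset.add_sum_erase _ _ hmem]
      have hrest : 0 ≤ ∑ i ∈ (Finset.univ.erase last).erase ⟨0, by omega⟩, x i := by
        refine Finset.sum_nonneg fun i hi => hj i ?_
        exact (Finset.mem_erase.mp hi).1
      linarith
    obtain ⟨c, hc⟩ := hdvd
    have hdB : (ℓ : ℤ) ∣ A - B := ⟨c - B, by linear_combination hc⟩
    obtain ⟨d, hd⟩ := hdB
    have hkZ : (1 : ℤ) ≤ (k : ℤ) := by exact_mod_cast hk1
    have hkℓ : (k : ℤ) ≤ (ℓ : ℤ) - 1 := by omega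
    have hℓZ : (2 : ℤ) ≤ (ℓ : ℤ) := by exact_mod_cast hℓ
    rcases le_or_gt 0 d with hdpos | hdneg
    · nlinarith [mul_nonneg (mul_nonneg (by linarith : (0:ℤ) ≤ (k:ℤ)) (by linarith : (0:ℤ) ≤ (ℓ:ℤ))) hdpos, mul_nonneg hBnn (by linarith : (0:ℤ) ≤ (ℓ:ℤ))]
    · have hd1 : d ≤ -1 := by omega
      nlinarith [mul_nonneg (by linarith : (0:ℤ) ≤ (ℓ:ℤ) - (k:ℤ) - 1) (by linarith : (0:ℤ) ≤ -d - 1), mul_nonneg hBnn (by linarith : (0:ℤ) ≤ (ℓ:ℤ) - (k:ℤ))]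
end
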